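/- If x, y ∈ X lie in a common cluster of some partition P^s with s ≤ t, then x and y lie in the same connected component of the MCF complex K^t; consequently, if the partition P^t is fractured (some earlier partition does not refine it), then the number of connected components of K^t is strictly less than the number of clusters #P^t. -/

import Mathlib

open Finset

/-- The 1-skeleton graph of the MCF complex `K^T`. -/
def mcfGraph {X : Type*} [Fintype X] [DecidableEq X] {M : ℕ}
    (P : Fin M → Finpartition (univ : Finset X)) (t : Fin M → ℝ) (T : ℝ) :
    SimpleGraph X where
  Adj x y := x ≠ y ∧ ∃ s, t s ≤ T ∧ ∃ C ∈ (P s).parts, x ∈ C ∧ y ∈ C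
  symm := ⟨by
    rintro x y ⟨hxy, s, hs, C, hC, hx, hy⟩
    exact ⟨hxy.symm, s, hs, C, hC, hy, hx⟩⟩
  loopless := ⟨fun x h => h.1 rfl⟩

/-
If every part of a partition `Q` of the vertices lies in one connected component, then sending a
part to its component is a surjection `Q.parts → G.ConnectedComponent`; two reachable vertices in
different parts make it non-injective. For the MCF graph at scale `t m` this applies to
`Q = P m`, and a cluster of an earlier `P s` not contained in a cluster of `P m` supplies the two
vertices.
-/

namespace Finpartition

variable {α : Type*} [DecidableEq α] {s : Finset α}

theorem exists_part_ne_of_not_le {P Q : Finpartition s} (h : ¬ P ≤ Q) :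
    ∃ C ∈ P.parts, ∃ x ∈ C, ∃ y ∈ C, Q.part x ≠ Q.part y := by
  contrapose! h
  intro C hC
  obtain ⟨x, hx⟩ := P.nonempty_of_mem_parts hC
  have hxs : x ∈ s := P.le hC hx
  refine ⟨Q.part x, Q.part_mem.2 hxs, fun y hy => ?_⟩
  rw [h C hC x hx y hy]
  exact Q.mem_part_self.2 (P.le hC hy)

end Finpartition

namespace SimpleGraph

variable {V : Type*} [Fintype V] [DecidableEq V] {G : SimpleGraph V}

theorem card_connectedComponent_lt_card_parts {Q : Finpartition (univ : Finset V)}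
    (hQ : ∀ C ∈ Q.parts, ∀ x ∈ C, ∀ y ∈ C, G.Reachable x y) {x y : V}
    (hxy : G.Reachable x y) (hne : Q.part x ≠ Q.part y) :
    Nat.card G.ConnectedComponent < #Q.parts := by
  classical
  let F : Q.parts → G.ConnectedComponent :=
    fun C => G.connectedComponentMk (Q.nonempty_of_mem_parts C.2).choose
  have hF : ∀ (C : Q.parts) (z : V), z ∈ (C : Finset V) → F C = G.connectedComponentMk z :=
    fun C z hz =>
      ConnectedComponent.sound (hQ C C.2 _ (Q.nonempty_of_mem_parts C.2).choose_spec z hz)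
  have hF_part : ∀ z, F ⟨Q.part z, Q.part_mem.2 (mem_univ z)⟩ = G.connectedComponentMk z :=
    fun z => hF _ z (Q.mem_part_self.2 (mem_univ z))
  have hsurj : Function.Surjective F :=
    ConnectedComponent.ind fun z => ⟨_, hF_part z⟩
  have hninj : ¬ Function.Injective F := fun hinj =>
    hne <| congrArg Subtype.val <| hinj <|
      (hF_part x).trans <| (ConnectedComponent.sound hxy).trans (hF_part y).symm
  rw [Nat.card_eq_fintype_card, ← Fintype.card_coe]
  exact Fintype.card_lt_of_surjective_not_injective F hsurj hninj

end SimpleGraph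

section MCF

variable {X : Type*} [Fintype X] [DecidableEq X] {M : ℕ}
  (P : Fin M → Finpartition (univ : Finset X)) (t : Fin M → ℝ)

theorem mcfGraph_reachable_of_mem_part {T : ℝ} {s : Fin M} (hs : t s ≤ T) {C : Finset X}
    (hC : C ∈ (P s).parts) {x y : X} (hx : x ∈ C) (hy : y ∈ C) :
    (mcfGraph P t T).Reachable x y := by
  obtain rfl | hxy := eq_or_ne x y
  · rfl
  · exact SimpleGraph.Adj.reachable ⟨hxy, s, hs, C, hC, hx, hy⟩

end MCF

theorem mcf_coclustered_reachable_and_fractured_lt_general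
    {X : Type*} [Fintype X] [DecidableEq X] {M : ℕ}
    (P : Fin M → Finpartition (univ : Finset X)) (t : Fin M → ℝ) :
    (∀ (T : ℝ) (x y : X), (∃ s, t s ≤ T ∧ ∃ C ∈ (P s).parts, x ∈ C ∧ y ∈ C) →
        (mcfGraph P t T).Reachable x y) ∧
      ∀ m : Fin M, (∃ s : Fin M, t s ≤ t m ∧ ¬ P s ≤ P m) →
        Nat.card (mcfGraph P t (t m)).ConnectedComponent < (P m).parts.card := by
  refine ⟨fun T x y ⟨s, hs, C, hC, hx, hy⟩ =>
    mcfGraph_reachable_of_mem_part P t hs hC hx hy, ?_⟩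
  rintro m ⟨s, hs, hns⟩
  obtain ⟨C, hC, x, hx, y, hy, hne⟩ := Finpartition.exists_part_ne_of_not_le hns
  exact SimpleGraph.card_connectedComponent_lt_card_parts
    (fun D hD _ hu _ hv => mcfGraph_reachable_of_mem_part P t le_rfl hD hu hv)
    (mcfGraph_reachable_of_mem_part P t hs hC hx hy) hne

/-- If `x` and `y` share a cluster at some scale `≤ T`, then they are in the same
connected component of `K^T`; consequently, if the partition at a scale `t m` is
fractured, the number of connected components of `K^{t m}` is strictly smaller
than the number of clusters of `P m`. -/
theorem mcf_coclustered_reachable_and_fractured_lt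
    {X : Type*} [Fintype X] [DecidableEq X] {M : ℕ}
    (P : Fin M → Finpartition (univ : Finset X)) (t : Fin M → ℝ) (ht : StrictMono t) :
    (∀ (T : ℝ) (x y : X), (∃ s, t s ≤ T ∧ ∃ C ∈ (P s).parts, x ∈ C ∧ y ∈ C) →
        (mcfGraph P t T).Reachable x y) ∧
      ∀ m : Fin M, (∃ s : Fin M, t s ≤ t m ∧ ¬ P s ≤ P m) →
        Nat.card (mcfGraph P t (t m)).ConnectedComponent < (P m).parts.card :=
  mcf_coclustered_reachable_and_fractured_lt_general P t
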